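/- arXiv:1409.7471 — 4 statements merged into one kernel-verified Lean document; each statement's English description precedes it below -/
import Mathlib

section
/- Let β, γ, h be positive real numbers and let N be a nonnegative integer. Then the series ∑_{k=N+1}^∞ exp(−β·exp(γ·k·h)) converges and its sum is at most exp(−β·exp(γ·N·h))/(β·γ·h). -/
/-!
Write `φ u = exp (-β exp u)`. By convexity of `exp`, applied twice, for `0 ≤ u ≤ v` one has
`β (v - u) φ v ≤ φ u - φ v`. Taking `u = γ (N + k) h` and `v = u + γ h` bounds each term of the
series, scaled by `β γ h`, by one step of a telescoping sum, which adds up to at most `φ (γ N h)`.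
-/

open Real Finset

theorem Real.exp_mul_sub_le_exp_sub_exp (x y : ℝ) : exp y * (x - y) ≤ exp x - exp y := by
  have h := mul_le_mul_of_nonneg_left (add_one_le_exp (x - y)) (exp_nonneg y)
  rw [← exp_add, add_sub_cancel] at h
  linarith

theorem Real.sub_le_exp_sub_exp {u v : ℝ} (hu : 0 ≤ u) (huv : u ≤ v) : v - u ≤ exp v - exp u :=
  calc v - u ≤ exp u * (v - u) := le_mul_of_one_le_left (sub_nonneg.2 huv) (one_le_exp hu)
    _ ≤ exp v - exp u := exp_mul_sub_le_exp_sub_exp v u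

theorem Real.mul_exp_neg_mul_exp_le_sub {β u v : ℝ} (hβ : 0 ≤ β) (hu : 0 ≤ u) (huv : u ≤ v) :
    β * (v - u) * exp (-β * exp v) ≤ exp (-β * exp u) - exp (-β * exp v) :=
  calc β * (v - u) * exp (-β * exp v)
      ≤ exp (-β * exp v) * (-β * exp u - -β * exp v) := by
        rw [mul_comm]
        gcongr
        linarith [mul_le_mul_of_nonneg_left (sub_le_exp_sub_exp hu huv) hβ]
    _ ≤ exp (-β * exp u) - exp (-β * exp v) := exp_mul_sub_le_exp_sub_exp _ _

theorem summable_and_tsum_le_of_mul_le_sub_succ {t g : ℕ → ℝ} {c : ℝ} (hc : 0 < c)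
    (ht : ∀ k, 0 ≤ t k) (hg : ∀ k, 0 ≤ g k) (htg : ∀ k, c * t k ≤ g k - g (k + 1)) :
    Summable t ∧ ∑' k, t k ≤ g 0 / c := by
  have partial_le : ∀ n, ∑ k ∈ range n, t k ≤ g 0 / c := fun n ↦ by
    rw [le_div_iff₀' hc, mul_sum]
    calc ∑ k ∈ range n, c * t k ≤ ∑ k ∈ range n, (g k - g (k + 1)) := sum_le_sum fun k _ ↦ htg k
      _ = g 0 - g n := sum_range_sub' g n
      _ ≤ g 0 := sub_le_self _ (hg n)
  exact ⟨summable_of_sum_range_le ht partial_le, Real.tsum_le_of_sum_range_le ht partial_le⟩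

/-- For β, γ, h > 0 and N a nonnegative integer, the series
∑_{k=N+1}^∞ exp(−β·exp(γ·k·h)) converges and its sum is at most
exp(−β·exp(γ·N·h))/(β·γ·h). -/
theorem tail_sum_double_exponential_decay (β γ h : ℝ) (hβ : 0 < β) (hγ : 0 < γ) (hh : 0 < h)
    (N : ℕ) :
    Summable (fun k : ℕ => Real.exp (-β * Real.exp (γ * ((N : ℝ) + 1 + k) * h))) ∧
      ∑' k : ℕ, Real.exp (-β * Real.exp (γ * ((N : ℝ) + 1 + k) * h)) ≤
        Real.exp (-β * Real.exp (γ * N * h)) / (β * γ * h) := by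
  have step : ∀ k : ℕ, β * γ * h * exp (-β * exp (γ * ((N : ℝ) + 1 + k) * h)) ≤
      exp (-β * exp (γ * ((N : ℝ) + k) * h)) - exp (-β * exp (γ * ((N : ℝ) + ↑(k + 1)) * h)) :=
    fun k ↦ by
      have hv : γ * ((N : ℝ) + ↑(k + 1)) * h = γ * ((N : ℝ) + 1 + k) * h := by push_cast; ring
      have hd : γ * ((N : ℝ) + 1 + k) * h - γ * ((N : ℝ) + k) * h = γ * h := by ring
      have := mul_exp_neg_mul_exp_le_sub hβ.le (u := γ * ((N : ℝ) + k) * h)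
        (v := γ * ((N : ℝ) + 1 + k) * h) (by positivity) (by nlinarith)
      rwa [hv, mul_assoc β γ h, ← hd]
  simpa using summable_and_tsum_le_of_mul_le_sub_succ (by positivity)
    (fun _ ↦ (exp_pos _).le) (fun _ ↦ (exp_pos _).le) step
end

section
/- For each nonnegative integer N, the (2N+1)×(2N+1) real matrix T indexed by j, k ∈ {−N, …, N} with entries T_{jk} = π²/3 when j = k and T_{jk} = 2(−1)^{j−k}/(j−k)² when j ≠ k is symmetric positive definite. Equivalently, the matrix with entries −sinc''(j−k), where sinc(x) = sin(πx)/(πx) with sinc(0) = 1, is symmetric positive definite. -/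
open Real

noncomputable def sinc (x : ℝ) : ℝ := if x = 0 then 1 else Real.sin (π * x) / (π * x)

/-!
Differentiating `sinc x = ∫₀¹ cos (π x t) dt` twice under the integral sign gives
`-sinc'' x = ∫₀¹ (π t)² cos (π x t) dt`, and the same weight produces the entries of `T`, since
`∫₀¹ (π t)² cos (π m t) dt = 2 (-1)^m / m²` for integers `m ≠ 0`. Expanding
`cos (π (j - k) t) = cos (π j t) cos (π k t) + sin (π j t) sin (π k t)` turns the quadratic form
into `∫₀¹ (π t)² (C(t)² + S(t)²) dt`, where `C + i S = ∑ⱼ xⱼ exp (i π j t)`. If it vanishes, so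
do `C` and `S` on `(0, 1]`, and the orthogonality `∫₀¹ cos (π m t) dt = δ_{m,0}` recovers
`xₖ = ∫₀¹ (C(t) cos (π k t) + S(t) sin (π k t)) dt = 0`.
-/

open Set Function intervalIntegral Matrix

theorem integral_cos_mul_of_ne_zero {c : ℝ} (hc : c ≠ 0) :
    ∫ t in (0 : ℝ)..1, cos (c * t) = sin c / c := by
  rw [integral_comp_mul_left (fun t => cos t) hc, integral_cos]
  simp [div_eq_inv_mul]

theorem integral_cos_pi_int_mul (m : ℤ) :
    ∫ t in (0 : ℝ)..1, cos (π * m * t) = if m = 0 then 1 else 0 := by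
  split_ifs with hm
  · simp [hm]
  · rw [integral_cos_mul_of_ne_zero (by positivity), mul_comm, sin_int_mul_pi, zero_div]

theorem integral_sq_mul_cos_mul_of_ne_zero {c : ℝ} (hc : c ≠ 0) :
    ∫ t in (0 : ℝ)..1, t ^ 2 * cos (c * t) =
      sin c / c + 2 * cos c / c ^ 2 - 2 * sin c / c ^ 3 := by
  have hderiv : ∀ t : ℝ, HasDerivAt
      (fun s => s ^ 2 * sin (c * s) / c + 2 * s * cos (c * s) / c ^ 2 - 2 * sin (c * s) / c ^ 3)
      (t ^ 2 * cos (c * t)) t := by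
    intro t
    have hlin : HasDerivAt (fun s => c * s) c t := hasDerivAt_const_mul c
    refine (((((hasDerivAt_pow 2 t).mul hlin.sin).div_const c).add
      ((((hasDerivAt_id' t).const_mul 2).mul hlin.cos).div_const (c ^ 2))).sub
      ((hlin.sin.const_mul 2).div_const (c ^ 3))).congr_deriv ?_
    field_simp
    ring
  have hcont : Continuous fun t => t ^ 2 * cos (c * t) := by fun_prop
  rw [integral_eq_sub_of_hasDerivAt (fun t _ => hderiv t) (hcont.intervalIntegrable 0 1)]
  simp

theorem integral_sq_pi_mul_cos_pi_int_mul (m : ℤ) :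
    ∫ t in (0 : ℝ)..1, (π * t) ^ 2 * cos (π * m * t) =
      if m = 0 then π ^ 2 / 3 else 2 * (-1) ^ m / (m : ℝ) ^ 2 := by
  simp_rw [mul_pow, mul_assoc, integral_const_mul, ← mul_assoc]
  split_ifs with hm
  · simp only [hm, Int.cast_zero, mul_zero, zero_mul, cos_zero, mul_one, integral_pow]
    ring
  · have hc : π * m ≠ 0 := by positivity
    rw [integral_sq_mul_cos_mul_of_ne_zero hc, mul_comm π, sin_int_mul_pi, cos_int_mul_pi]
    field_simp
    ring

theorem intervalIntegral.hasDerivAt_integral_of_continuous {E : Type*}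
    [NormedAddCommGroup E] [NormedSpace ℝ E] {F F' : ℝ → ℝ → E} {a b : ℝ}
    (hF : Continuous (uncurry F)) (hF' : Continuous (uncurry F'))
    (hderiv : ∀ x t, HasDerivAt (F · t) (F' x t) x) (x₀ : ℝ) :
    HasDerivAt (fun x => ∫ t in a..b, F x t) (∫ t in a..b, F' x₀ t) x₀ := by
  obtain ⟨M, hM⟩ := ((isCompact_closedBall x₀ 1).prod isCompact_uIcc).exists_bound_of_continuousOn
    hF'.continuousOn
  exact (hasDerivAt_integral_of_dominated_loc_of_deriv_le
    (Metric.closedBall_mem_nhds x₀ one_pos)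
    (.of_forall fun x => (hF.uncurry_left x).aestronglyMeasurable)
    ((hF.uncurry_left x₀).intervalIntegrable a b) (hF'.uncurry_left x₀).aestronglyMeasurable
    (.of_forall fun t ht x hx => hM (x, t) ⟨hx, uIoc_subset_uIcc ht⟩) intervalIntegrable_const
    (.of_forall fun t _ x _ => hderiv x t)).2

theorem sinc_eq_integral_cos (x : ℝ) :
    _root_.sinc x = ∫ t in (0 : ℝ)..1, cos (π * x * t) := by
  by_cases hx : x = 0
  · simp [_root_.sinc, hx]
  · rw [integral_cos_mul_of_ne_zero (by positivity), _root_.sinc, if_neg hx]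

theorem deriv_sinc :
    deriv _root_.sinc = fun x => ∫ t in (0 : ℝ)..1, -(π * t) * sin (π * x * t) := by
  funext x
  rw [funext sinc_eq_integral_cos]
  refine (hasDerivAt_integral_of_continuous (F := fun x t => cos (π * x * t))
    (F' := fun x t => -(π * t) * sin (π * x * t)) (by fun_prop) (by fun_prop)
    (fun x t => ?_) x).deriv
  exact ((hasDerivAt_const_mul π).mul_const t).cos.congr_deriv (by ring)

theorem iteratedDeriv_two_sinc (x : ℝ) :
    iteratedDeriv 2 _root_.sinc x =
      -∫ t in (0 : ℝ)..1, (π * t) ^ 2 * cos (π * x * t) := by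
  rw [iteratedDeriv_succ, iteratedDeriv_one, deriv_sinc, ← integral_neg]
  refine (hasDerivAt_integral_of_continuous (F := fun x t => -(π * t) * sin (π * x * t))
    (F' := fun x t => -((π * t) ^ 2 * cos (π * x * t))) (by fun_prop) (by fun_prop)
    (fun x t => ?_) x).deriv
  exact (((hasDerivAt_const_mul π).mul_const t).sin.const_mul (-(π * t))).congr_deriv (by ring)

section CosineKernel

variable {ι : Type*}

noncomputable def cosineKernelMatrix (w : ℝ → ℝ) (a : ι → ℤ) : Matrix ι ι ℝ :=
  Matrix.of fun j k => ∫ t in (0 : ℝ)..1, w t * cos (π * ((a j - a k : ℤ) : ℝ) * t)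

theorem cosineKernelMatrix_isHermitian (w : ℝ → ℝ) (a : ι → ℤ) :
    (cosineKernelMatrix w a).IsHermitian := by
  ext j k
  simp only [cosineKernelMatrix, conjTranspose_apply, of_apply, star_trivial, ← neg_sub (a j),
    Int.cast_neg, mul_neg, neg_mul, cos_neg]

variable [Fintype ι]

noncomputable def cosSum (a : ι → ℤ) (x : ι → ℝ) (t : ℝ) : ℝ :=
  ∑ j, x j * cos (π * a j * t)

noncomputable def sinSum (a : ι → ℤ) (x : ι → ℝ) (t : ℝ) : ℝ :=
  ∑ j, x j * sin (π * a j * t)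

theorem continuous_cosSum (a : ι → ℤ) (x : ι → ℝ) : Continuous (cosSum a x) := by
  unfold cosSum; fun_prop

theorem continuous_sinSum (a : ι → ℤ) (x : ι → ℝ) : Continuous (sinSum a x) := by
  unfold sinSum; fun_prop

theorem sq_cosSum_add_sq_sinSum (a : ι → ℤ) (x : ι → ℝ) (t : ℝ) :
    cosSum a x t ^ 2 + sinSum a x t ^ 2 =
      ∑ j, ∑ k, x j * x k * cos (π * ((a j - a k : ℤ) : ℝ) * t) := by
  simp only [cosSum, sinSum, sq, Finset.sum_mul_sum, ← Finset.sum_add_distrib]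
  refine Finset.sum_congr rfl fun j _ => Finset.sum_congr rfl fun k _ => ?_
  rw [Int.cast_sub, mul_sub, sub_mul, cos_sub]
  ring

theorem dotProduct_cosineKernelMatrix_mulVec {w : ℝ → ℝ} (hw : Continuous w) (a : ι → ℤ)
    (x : ι → ℝ) :
    x ⬝ᵥ (cosineKernelMatrix w a *ᵥ x) =
      ∫ t in (0 : ℝ)..1, w t * (cosSum a x t ^ 2 + sinSum a x t ^ 2) := by
  simp only [sq_cosSum_add_sq_sinSum, Finset.mul_sum]
  rw [integral_finsetSum fun j _ => by apply Continuous.intervalIntegrable; fun_prop]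
  refine Finset.sum_congr rfl fun j _ => ?_
  rw [integral_finsetSum fun k _ => by apply Continuous.intervalIntegrable; fun_prop, mulVec,
    dotProduct, Finset.mul_sum]
  refine Finset.sum_congr rfl fun k _ => ?_
  rw [cosineKernelMatrix, of_apply, ← integral_mul_const, ← integral_const_mul]
  congr 1 with t
  ring

theorem integral_cosSum_mul_cos_add_sinSum_mul_sin {a : ι → ℤ} (ha : Injective a)
    (x : ι → ℝ) (k : ι) :
    ∫ t in (0 : ℝ)..1, (cosSum a x t * cos (π * a k * t) + sinSum a x t * sin (π * a k * t))
      = x k := by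
  classical
  have hexpand : ∀ t, cosSum a x t * cos (π * a k * t) + sinSum a x t * sin (π * a k * t) =
      ∑ j, x j * cos (π * ((a j - a k : ℤ) : ℝ) * t) := by
    intro t
    simp only [cosSum, sinSum, Finset.sum_mul, ← Finset.sum_add_distrib]
    refine Finset.sum_congr rfl fun j _ => ?_
    rw [Int.cast_sub, mul_sub, sub_mul, cos_sub]
    ring
  have horth : ∀ j, ∫ t in (0 : ℝ)..1, cos (π * ((a j - a k : ℤ) : ℝ) * t) =
      if j = k then 1 else 0 := fun j => by
    simp only [integral_cos_pi_int_mul, sub_eq_zero, ha.eq_iff]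
  simp_rw [hexpand]
  rw [integral_finsetSum fun j _ => by apply Continuous.intervalIntegrable; fun_prop]
  simp only [integral_const_mul, horth, mul_ite, mul_one, mul_zero, Finset.sum_ite_eq',
    Finset.mem_univ, if_true]

theorem cosineKernelMatrix_posDef {w : ℝ → ℝ} (hw : Continuous w)
    (hw_pos : ∀ t ∈ Ioc (0 : ℝ) 1, 0 < w t) {a : ι → ℤ} (ha : Injective a) :
    (cosineKernelMatrix w a).PosDef := by
  refine posDef_iff_dotProduct_mulVec.mpr ⟨cosineKernelMatrix_isHermitian w a, fun x hx => ?_⟩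
  have hcosSum := continuous_cosSum a x
  have hsinSum := continuous_sinSum a x
  rw [star_trivial, dotProduct_cosineKernelMatrix_mulVec hw]
  refine integral_pos zero_lt_one (by fun_prop)
    (fun t ht => mul_nonneg (hw_pos t ht).le (by positivity)) ?_
  by_contra! hvanish
  refine hx (funext fun k => ?_)
  rw [← integral_cosSum_mul_cos_add_sinSum_mul_sin ha x k, Pi.zero_apply]
  refine (integral_congr_ae (g := fun _ => 0) (.of_forall fun t ht => ?_)).trans integral_zero
  rw [uIoc_of_le zero_le_one] at ht
  have hsq : cosSum a x t ^ 2 + sinSum a x t ^ 2 ≤ 0 :=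
    nonpos_of_mul_nonpos_right (hvanish t (Ioc_subset_Icc_self ht)) (hw_pos t ht)
  obtain ⟨hcos, hsin⟩ := (add_eq_zero_iff_of_nonneg (sq_nonneg _) (sq_nonneg _)).1
    (hsq.antisymm (by positivity))
  rw [pow_eq_zero_iff two_ne_zero] at hcos hsin
  rw [hcos, hsin, zero_mul, zero_mul, add_zero]

end CosineKernel

/-- the (2N+1)×(2N+1) matrix with diagonal entries π²/3 and off-diagonal
entries 2(−1)^{j−k}/(j−k)² is symmetric positive definite; equivalently the matrix with
entries −sinc''(j−k) is symmetric positive definite. -/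
theorem sinc_second_deriv_matrix_posDef (N : ℕ) :
    (Matrix.of fun j k : Fin (2 * N + 1) =>
        if j = k then π ^ 2 / 3
        else 2 * (-1 : ℝ) ^ ((j : ℤ) - (k : ℤ)) / (((j : ℤ) - (k : ℤ) : ℤ) : ℝ) ^ 2).PosDef ∧
      (Matrix.of fun j k : Fin (2 * N + 1) =>
        -iteratedDeriv 2 _root_.sinc (((j : ℤ) - (k : ℤ) : ℤ) : ℝ)).PosDef := by
  have hK :
      (cosineKernelMatrix (fun t => (π * t) ^ 2) fun j : Fin (2 * N + 1) => (j : ℤ)).PosDef :=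
    cosineKernelMatrix_posDef (by fun_prop) (fun t ht => by have := ht.1; positivity)
      (Nat.cast_injective.comp Fin.val_injective)
  constructor
  · convert hK using 1
    ext j k
    rw [cosineKernelMatrix, of_apply, of_apply, integral_sq_pi_mul_cos_pi_int_mul]
    simp only [sub_eq_zero, Nat.cast_inj, Fin.val_inj]
  · convert hK using 1
    ext j k
    rw [cosineKernelMatrix, of_apply, of_apply, iteratedDeriv_two_sinc, neg_neg]
end

section
/- Let m ≥ 1 and let A and B be real symmetric m×m matrices with B positive definite. Assume there is δ > 0 such that xᵀAx ≥ δ⁻¹·xᵀx for every vector x (in particular A is positive definite). Let λ ∈ ℝ, let v be a nonzero vector, and set r = (A − λB)v. Then there exist a real number μ > 0 and a nonzero vector z with Az = μBz such that |μ − λ| ≤ √(δμ) · √m · ‖r‖ / √(vᵀBv), where ‖·‖ is the Euclidean norm. -/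
/-!
Write `B = S * S` with `S` symmetric and invertible. The symmetric matrix `S⁻¹ * A * S⁻¹` has an
orthonormal eigenbasis `uᵢ`, and `zᵢ = S⁻¹ uᵢ` is then a `B`-orthonormal basis of generalized
eigenvectors. Expanding `v = ∑ cᵢ zᵢ` gives `vᵀBv = ∑ cᵢ²`, so some coefficient has
`vᵀBv ≤ m cᵢ²`, while `zᵢ ⬝ (A - λB) v = (μᵢ - λ) cᵢ` is bounded by Cauchy–Schwarz with
`‖zᵢ‖² ≤ δ zᵢᵀAzᵢ = δ μᵢ`.
-/

open Matrix

namespace Matrix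

variable {n : Type*} [Fintype n]

theorem IsSymm.dotProduct_mulVec_comm {M : Matrix n n ℝ} (hM : M.IsSymm) (x y : n → ℝ) :
    x ⬝ᵥ M *ᵥ y = y ⬝ᵥ M *ᵥ x := by
  simpa only [hM.eq] using dotProduct_transpose_mulVec M x y

theorem abs_dotProduct_le_sqrt_mul_sqrt (x y : n → ℝ) :
    |x ⬝ᵥ y| ≤ √(x ⬝ᵥ x) * √(y ⬝ᵥ y) := by
  have hx : 0 ≤ x ⬝ᵥ x := by simpa using dotProduct_star_self_nonneg x
  rw [← Real.sqrt_mul hx]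
  apply Real.abs_le_sqrt
  have h := real_inner_mul_inner_self_le (WithLp.toLp 2 x) (WithLp.toLp 2 y)
  simp only [EuclideanSpace.inner_toLp_toLp, star_trivial, dotProduct_comm y x] at h
  rwa [sq]

theorem exists_sum_sq_le_card_mul_sq [Nonempty n] (c : n → ℝ) :
    ∃ i, ∑ j, c j ^ 2 ≤ Fintype.card n * c i ^ 2 := by
  obtain ⟨i, -, hi⟩ :=
    Finset.exists_max_image Finset.univ (fun j => c j ^ 2) Finset.univ_nonempty
  exact ⟨i, by simpa using Finset.sum_le_card_nsmul Finset.univ _ _ hi⟩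

variable [DecidableEq n]

theorem PosDef.exists_isSymm_isUnit_mul_self_eq {B : Matrix n n ℝ} (hB : B.PosDef) :
    ∃ S : Matrix n n ℝ, S.IsSymm ∧ IsUnit S ∧ S * S = B := by
  open scoped MatrixOrder in
  exact ⟨CFC.sqrt B, (CFC.sqrt_nonneg B).posSemidef.isHermitian,
    (CFC.isUnit_sqrt_iff B hB.posSemidef.nonneg).2 hB.isUnit,
    CFC.sqrt_mul_sqrt_self B hB.posSemidef.nonneg⟩

structure IsGeneralizedEigenbasis (A B : Matrix n n ℝ) (z : n → n → ℝ) (μ : n → ℝ) : Prop where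
  mulVec_eq : ∀ i, A *ᵥ z i = μ i • B *ᵥ z i
  orthonormal : ∀ i j, z i ⬝ᵥ B *ᵥ z j = if i = j then 1 else 0
  sum_smul_eq : ∀ v, ∑ i, (z i ⬝ᵥ B *ᵥ v) • z i = v

theorem PosDef.exists_isGeneralizedEigenbasis {A B : Matrix n n ℝ} (hA : A.IsSymm)
    (hB : B.PosDef) : ∃ z μ, IsGeneralizedEigenbasis A B z μ := by
  obtain ⟨S, hS, hSunit, rfl⟩ := hB.exists_isSymm_isUnit_mul_self_eq
  have hSdet := (isUnit_iff_isUnit_det S).1 hSunit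
  have hSinv : S * S⁻¹ = 1 := mul_nonsing_inv S hSdet
  set C := S⁻¹ * A * S⁻¹
  have hC : C.IsHermitian := by
    simpa only [conjTranspose_eq_transpose_of_trivial, hS.inv.eq] using
      isHermitian_mul_mul_conjTranspose S⁻¹ (hA : A.IsHermitian)
  set u := hC.eigenvectorBasis
  have hSz : ∀ i, S *ᵥ S⁻¹ *ᵥ u i = u i := fun i => by
    rw [mulVec_mulVec, hSinv, one_mulVec]
  -- the substitution `z = S⁻¹ u` turns the `B`-inner product into the Euclidean one
  have hzB : ∀ i w, S⁻¹ *ᵥ u i ⬝ᵥ (S * S) *ᵥ w = u i ⬝ᵥ S *ᵥ w := fun i w => by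
    rw [← mulVec_mulVec, hS.dotProduct_mulVec_comm, hSz, dotProduct_comm]
  refine ⟨fun i => S⁻¹ *ᵥ u i, hC.eigenvalues, fun i => ?_, fun i j => ?_, fun v => ?_⟩
  · have hAS : A * S⁻¹ = S * C := by
      simp only [C, ← mul_assoc, hSinv, one_mul]
    rw [← mulVec_mulVec, hSz, mulVec_mulVec, hAS, ← mulVec_mulVec, hC.mulVec_eigenvectorBasis,
      mulVec_smul]
  · rw [hzB, hSz, ← orthonormal_iff_ite.1 u.orthonormal i j,
      EuclideanSpace.inner_eq_star_dotProduct, star_trivial, dotProduct_comm]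
  · have h := congrArg WithLp.ofLp (u.sum_repr' (WithLp.toLp 2 (S *ᵥ v)))
    simp only [WithLp.ofLp_sum, WithLp.ofLp_smul, EuclideanSpace.inner_eq_star_dotProduct,
      star_trivial, dotProduct_comm (S *ᵥ v)] at h
    simp only [hzB, ← mulVec_smul, ← mulVec_sum, h, mulVec_mulVec, nonsing_inv_mul S hSdet,
      one_mulVec]

namespace IsGeneralizedEigenbasis

variable {A B : Matrix n n ℝ} {z : n → n → ℝ} {μ : n → ℝ}

theorem dotProduct_mulVec_self (hz : IsGeneralizedEigenbasis A B z μ) (i : n) :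
    z i ⬝ᵥ A *ᵥ z i = μ i := by
  rw [hz.mulVec_eq, dotProduct_smul, hz.orthonormal, if_pos rfl, smul_eq_mul, mul_one]

theorem ne_zero (hz : IsGeneralizedEigenbasis A B z μ) (i : n) : z i ≠ 0 := by
  intro h
  simpa [h] using hz.orthonormal i i

theorem sum_sq_dotProduct_mulVec (hz : IsGeneralizedEigenbasis A B z μ) (v : n → ℝ) :
    ∑ i, (z i ⬝ᵥ B *ᵥ v) ^ 2 = v ⬝ᵥ B *ᵥ v := by
  simpa only [sum_dotProduct, smul_dotProduct, smul_eq_mul, sq] using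
    congrArg (· ⬝ᵥ B *ᵥ v) (hz.sum_smul_eq v)

theorem dotProduct_sub_smul_mulVec (hz : IsGeneralizedEigenbasis A B z μ) (hA : A.IsSymm)
    (hB : B.IsSymm) (lam : ℝ) (i : n) (v : n → ℝ) :
    z i ⬝ᵥ (A - lam • B) *ᵥ v = (μ i - lam) * (z i ⬝ᵥ B *ᵥ v) := by
  rw [(hA.sub (hB.smul lam)).dotProduct_mulVec_comm, sub_mulVec, smul_mulVec, hz.mulVec_eq,
    ← sub_smul, dotProduct_smul, smul_eq_mul, hB.dotProduct_mulVec_comm]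

theorem eigenvalue_pos (hz : IsGeneralizedEigenbasis A B z μ) {δ : ℝ} (hδ : 0 < δ)
    (hAlb : ∀ x : n → ℝ, δ⁻¹ * (x ⬝ᵥ x) ≤ x ⬝ᵥ A *ᵥ x) (i : n) : 0 < μ i := by
  have hzz : 0 < z i ⬝ᵥ z i := by
    simpa using dotProduct_star_self_pos_iff.2 (hz.ne_zero i)
  rw [← hz.dotProduct_mulVec_self]
  exact (mul_pos (inv_pos.2 hδ) hzz).trans_le (hAlb (z i))

theorem dotProduct_self_le (hz : IsGeneralizedEigenbasis A B z μ) {δ : ℝ} (hδ : 0 < δ)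
    (hAlb : ∀ x : n → ℝ, δ⁻¹ * (x ⬝ᵥ x) ≤ x ⬝ᵥ A *ᵥ x) (i : n) : z i ⬝ᵥ z i ≤ δ * μ i := by
  rw [← hz.dotProduct_mulVec_self, ← inv_mul_le_iff₀ hδ]
  exact hAlb (z i)

end IsGeneralizedEigenbasis

end Matrix

theorem generalized_eigenvalue_perturbation_general (m : ℕ)
    (A B : Matrix (Fin m) (Fin m) ℝ) (hA : A.IsSymm) (hBpd : B.PosDef)
    (δ : ℝ) (hδ : 0 < δ)
    (hAlb : ∀ x : Fin m → ℝ, δ⁻¹ * (x ⬝ᵥ x) ≤ x ⬝ᵥ A.mulVec x)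
    (lam : ℝ) (v : Fin m → ℝ) (hv : v ≠ 0) :
    ∃ μ : ℝ, 0 < μ ∧ ∃ z : Fin m → ℝ, z ≠ 0 ∧ A.mulVec z = μ • B.mulVec z ∧
      |μ - lam| ≤ Real.sqrt (δ * μ) * Real.sqrt m *
          Real.sqrt (((A - lam • B).mulVec v) ⬝ᵥ ((A - lam • B).mulVec v)) /
            Real.sqrt (v ⬝ᵥ B.mulVec v) := by
  obtain ⟨z, μ, hz⟩ := hBpd.exists_isGeneralizedEigenbasis hA
  have : Nonempty (Fin m) := ⟨(Function.ne_iff.1 hv).choose⟩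
  set c := fun j => z j ⬝ᵥ B *ᵥ v
  set r := (A - lam • B) *ᵥ v
  obtain ⟨i, hi⟩ := exists_sum_sq_le_card_mul_sq c
  rw [hz.sum_sq_dotProduct_mulVec, Fintype.card_fin] at hi
  refine ⟨μ i, hz.eigenvalue_pos hδ hAlb i, z i, hz.ne_zero i, hz.mulVec_eq i, ?_⟩
  have hvBv : 0 < v ⬝ᵥ B *ᵥ v := by simpa using hBpd.dotProduct_mulVec_pos hv
  have hcoeff : √(v ⬝ᵥ B *ᵥ v) ≤ √m * |c i| := by
    rw [← Real.sqrt_sq_eq_abs, ← Real.sqrt_mul m.cast_nonneg]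
    exact Real.sqrt_le_sqrt hi
  have hres : |μ i - lam| * |c i| ≤ √(δ * μ i) * √(r ⬝ᵥ r) := by
    rw [← abs_mul, ← hz.dotProduct_sub_smul_mulVec hA hBpd.isHermitian lam]
    exact (abs_dotProduct_le_sqrt_mul_sqrt _ _).trans (mul_le_mul_of_nonneg_right
      (Real.sqrt_le_sqrt (hz.dotProduct_self_le hδ hAlb i)) (Real.sqrt_nonneg _))
  rw [le_div_iff₀ (Real.sqrt_pos.2 hvBv)]
  calc |μ i - lam| * √(v ⬝ᵥ B *ᵥ v) ≤ |μ i - lam| * (√m * |c i|) := by gcongr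
    _ = √m * (|μ i - lam| * |c i|) := by ring
    _ ≤ √m * (√(δ * μ i) * √(r ⬝ᵥ r)) := by gcongr
    _ = √(δ * μ i) * √m * √(r ⬝ᵥ r) := by ring

/-- if A, B are real symmetric m×m matrices (m ≥ 1), B positive definite, and
xᵀAx ≥ δ⁻¹·xᵀx for all x (δ > 0), then for any λ ∈ ℝ and nonzero v, with r = (A − λB)v,
there is a generalized eigenpair Az = μBz with μ > 0, z ≠ 0 and
|μ − λ| ≤ √(δμ)·√m·‖r‖/√(vᵀBv). -/
theorem generalized_eigenvalue_perturbation (m : ℕ) (hm : 1 ≤ m)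
    (A B : Matrix (Fin m) (Fin m) ℝ) (hA : A.IsSymm) (hB : B.IsSymm) (hBpd : B.PosDef)
    (δ : ℝ) (hδ : 0 < δ)
    (hAlb : ∀ x : Fin m → ℝ, δ⁻¹ * (x ⬝ᵥ x) ≤ x ⬝ᵥ A.mulVec x)
    (lam : ℝ) (v : Fin m → ℝ) (hv : v ≠ 0) :
    ∃ μ : ℝ, 0 < μ ∧ ∃ z : Fin m → ℝ, z ≠ 0 ∧ A.mulVec z = μ • B.mulVec z ∧
      |μ - lam| ≤ Real.sqrt (δ * μ) * Real.sqrt m *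
          Real.sqrt (((A - lam • B).mulVec v) ⬝ᵥ ((A - lam • B).mulVec v)) /
            Real.sqrt (v ⬝ᵥ B.mulVec v) :=
  generalized_eigenvalue_perturbation_general m A B hA hBpd δ hδ hAlb lam v hv
end

section
/- Let m ≥ 1 and let A and B be real symmetric m×m matrices with B positive definite. Assume there is δ > 0 such that xᵀAx ≥ δ⁻¹·xᵀx for every vector x. Let λ > 0, let v be a nonzero vector, set r = (A − λB)v, and write C = √m · ‖r‖ / √(vᵀBv), where ‖·‖ is the Euclidean norm. Then there exist a real number μ > 0 and a nonzero vector z with Az = μBz such that |μ − λ| ≤ max( 2δC², √(2δλ)·C ). -/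
/-!
With `S = √B` and `M = S⁻¹ A S⁻¹`, the generalized eigenpairs of `(A, B)` are `(μ, S⁻¹ e)` for the
eigenpairs `(μ, e)` of `M`, and `u = S v` satisfies `S⁻¹ r = (M - λ) u`. Expanding in an orthonormal
eigenbasis of `M` gives `min_μ (μ - λ)² / μ · vᵀBv ≤ (S⁻¹r)ᵀ M⁻¹ (S⁻¹r) = rᵀA⁻¹r ≤ δ ‖r‖²`, so the
minimising eigenvalue satisfies `(μ - λ)² ≤ δ μ C²`. The cases `μ ≤ 2λ` and `μ > 2λ` then give the
two terms of the maximum.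
-/

open Matrix
open scoped MatrixOrder

lemma OrthonormalBasis.dotProduct_eq_sum {ι n : Type*} [Fintype ι] [Fintype n]
    (e : OrthonormalBasis ι ℝ (EuclideanSpace ℝ n)) (a b : n → ℝ) :
    a ⬝ᵥ b = ∑ i, (⇑(e i) ⬝ᵥ a) * (⇑(e i) ⬝ᵥ b) := by
  have := e.sum_inner_mul_inner (WithLp.toLp 2 a) (WithLp.toLp 2 b)
  simp only [EuclideanSpace.inner_eq_star_dotProduct, star_trivial] at this
  rw [dotProduct_comm, ← this]
  exact Finset.sum_congr rfl fun i _ ↦ by rw [dotProduct_comm b]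

namespace Matrix

variable {n : Type*} [Fintype n]

lemma IsSymm.mulVec_dotProduct {P : Matrix n n ℝ} (hP : P.IsSymm) (a b : n → ℝ) :
    P *ᵥ a ⬝ᵥ b = a ⬝ᵥ P *ᵥ b := by
  rw [dotProduct_comm, dotProduct_mulVec, ← mulVec_transpose, hP.eq, dotProduct_comm]

lemma PosDef.of_mul_dotProduct_self_le {A : Matrix n n ℝ} (hA : A.IsSymm) {c : ℝ} (hc : 0 < c)
    (h : ∀ x, c * (x ⬝ᵥ x) ≤ x ⬝ᵥ A *ᵥ x) : A.PosDef :=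
  .of_dotProduct_mulVec_pos (isHermitian_iff_isSymm.mpr hA) fun x hx ↦ by
    simpa using (mul_pos hc (dotProduct_star_self_pos_iff.mpr hx)).trans_le (h x)

lemma dotProduct_le_mul_dotProduct_self_of_mulVec_eq {A : Matrix n n ℝ} {δ : ℝ} (hδ : 0 < δ)
    (hA : ∀ x, δ⁻¹ * (x ⬝ᵥ x) ≤ x ⬝ᵥ A *ᵥ x) {r y : n → ℝ} (hy : A *ᵥ y = r) :
    r ⬝ᵥ y ≤ δ * (r ⬝ᵥ r) := by
  have hsq : 0 ≤ (y - δ • r) ⬝ᵥ (y - δ • r) := by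
    simpa using dotProduct_star_self_nonneg (y - δ • r)
  have hcoercive : y ⬝ᵥ y ≤ δ * (r ⬝ᵥ y) := by
    have := mul_le_mul_of_nonneg_left (hA y) hδ.le
    rwa [← mul_assoc, mul_inv_cancel₀ hδ.ne', one_mul, hy, dotProduct_comm y r] at this
  simp only [sub_dotProduct, dotProduct_sub, smul_dotProduct, dotProduct_smul, smul_eq_mul,
    dotProduct_comm y r] at hsq
  nlinarith

variable [DecidableEq n]

lemma IsHermitian.eigenvectorBasis_dotProduct_mulVec {M : Matrix n n ℝ} (hM : M.IsHermitian)
    (i : n) (a : n → ℝ) :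
    ⇑(hM.eigenvectorBasis i) ⬝ᵥ M *ᵥ a = hM.eigenvalues i * (⇑(hM.eigenvectorBasis i) ⬝ᵥ a) := by
  rw [← (isHermitian_iff_isSymm.mp hM).mulVec_dotProduct, hM.mulVec_eigenvectorBasis,
    smul_dotProduct, smul_eq_mul]

lemma IsHermitian.exists_sq_sub_div_mul_dotProduct_le [Nonempty n] {M : Matrix n n ℝ}
    (hM : M.IsHermitian) (hpos : ∀ i, 0 < hM.eigenvalues i) (lam : ℝ) {u w : n → ℝ}
    (hw : M *ᵥ w = M *ᵥ u - lam • u) :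
    ∃ i, (hM.eigenvalues i - lam) ^ 2 / hM.eigenvalues i * (u ⬝ᵥ u) ≤
      (M *ᵥ u - lam • u) ⬝ᵥ w := by
  set e := hM.eigenvectorBasis
  set ev := hM.eigenvalues
  set c : n → ℝ := fun i ↦ ⇑(e i) ⬝ᵥ u
  have hcoord_x (i : n) : ⇑(e i) ⬝ᵥ (M *ᵥ u - lam • u) = (ev i - lam) * c i := by
    rw [dotProduct_sub, dotProduct_smul, hM.eigenvectorBasis_dotProduct_mulVec, smul_eq_mul,
      sub_mul]
  have hcoord_w (i : n) : ⇑(e i) ⬝ᵥ w = (ev i - lam) * c i / ev i := by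
    rw [eq_div_iff (hpos i).ne', mul_comm, ← hM.eigenvectorBasis_dotProduct_mulVec, hw, hcoord_x]
  obtain ⟨i, -, hmin⟩ := Finset.exists_min_image Finset.univ
    (fun i ↦ (ev i - lam) ^ 2 / ev i) Finset.univ_nonempty
  refine ⟨i, ?_⟩
  rw [e.dotProduct_eq_sum u u, e.dotProduct_eq_sum _ w, Finset.mul_sum]
  refine Finset.sum_le_sum fun j _ ↦ ?_
  rw [hcoord_x, hcoord_w]
  calc (ev i - lam) ^ 2 / ev i * (c j * c j)
      ≤ (ev j - lam) ^ 2 / ev j * (c j * c j) :=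
        mul_le_mul_of_nonneg_right (hmin j (Finset.mem_univ j)) (mul_self_nonneg _)
    _ = (ev j - lam) * c j * ((ev j - lam) * c j / ev j) := by ring

lemma PosDef.exists_generalized_eigenpair_sq_sub_div_mul_le {A B : Matrix n n ℝ} (hA : A.PosDef)
    (hB : B.PosDef) (lam : ℝ) {v y : n → ℝ} (hv : v ≠ 0) (hy : A *ᵥ y = (A - lam • B) *ᵥ v) :
    ∃ μ : ℝ, 0 < μ ∧ ∃ z : n → ℝ, z ≠ 0 ∧ A *ᵥ z = μ • B *ᵥ z ∧
      (μ - lam) ^ 2 / μ * (v ⬝ᵥ B *ᵥ v) ≤ (A - lam • B) *ᵥ v ⬝ᵥ y := by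
  obtain ⟨j, -⟩ := Function.ne_iff.mp hv
  have : Nonempty n := ⟨j⟩
  set S := CFC.sqrt B
  have hSS : S * S = B := CFC.sqrt_mul_sqrt_self B hB.posSemidef.nonneg
  have hSpd : S.PosDef := hB.isStrictlyPositive.sqrt.posDef
  set T := S⁻¹
  have hST : S * T = 1 := mul_nonsing_inv S (S.isUnit_iff_isUnit_det.mp hSpd.isUnit)
  have hTS : T * S = 1 := nonsing_inv_mul S (S.isUnit_iff_isUnit_det.mp hSpd.isUnit)
  have hSsymm : S.IsSymm := isHermitian_iff_isSymm.mp hSpd.isHermitian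
  have hTsymm : T.IsSymm := hSsymm.inv
  have hTinj : Function.Injective T.mulVec := mulVec_injective_iff_isUnit.mpr hSpd.inv.isUnit
  set M := T * A * T
  have hMpd : M.PosDef := by
    have hTT : Tᴴ = T := by rw [conjTranspose_eq_transpose_of_trivial, hTsymm.eq]
    have h := hA.conjTranspose_mul_mul_same hTinj
    rwa [hTT] at h
  have hMS : M * S = T * A := by rw [mul_assoc, hTS, mul_one]
  have hSM : S * M = A * T := by rw [← mul_assoc, ← mul_assoc, hST, one_mul]
  have hTB : T * B = S := by rw [← hSS, ← mul_assoc, hTS, one_mul]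
  have hBT : B * T = S := by rw [← hSS, mul_assoc, hST, mul_one]
  have hTr : T *ᵥ ((A - lam • B) *ᵥ v) = M *ᵥ (S *ᵥ v) - lam • S *ᵥ v := by
    rw [sub_mulVec, smul_mulVec, mulVec_sub, mulVec_smul, mulVec_mulVec, mulVec_mulVec, hTB,
      ← hMS, ← mulVec_mulVec]
  have hw : M *ᵥ (S *ᵥ y) = M *ᵥ (S *ᵥ v) - lam • S *ᵥ v := by
    rw [mulVec_mulVec, hMS, ← mulVec_mulVec, hy, hTr]
  obtain ⟨i, hi⟩ :=
    hMpd.isHermitian.exists_sq_sub_div_mul_dotProduct_le hMpd.eigenvalues_pos lam hw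
  set e := ⇑(hMpd.isHermitian.eigenvectorBasis i)
  refine ⟨_, hMpd.eigenvalues_pos i, T *ᵥ e, ?_, ?_, ?_⟩
  · have he : e ≠ 0 := fun h ↦
      hMpd.isHermitian.eigenvectorBasis.orthonormal.ne_zero i (by ext k; exact congrFun h k)
    simpa using hTinj.ne he
  · rw [mulVec_mulVec, mulVec_mulVec, hBT, ← hSM, ← mulVec_mulVec,
      hMpd.isHermitian.mulVec_eigenvectorBasis, mulVec_smul]
  · have huu : S *ᵥ v ⬝ᵥ S *ᵥ v = v ⬝ᵥ B *ᵥ v := by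
      rw [hSsymm.mulVec_dotProduct, mulVec_mulVec, hSS]
    have hxw : (M *ᵥ (S *ᵥ v) - lam • S *ᵥ v) ⬝ᵥ S *ᵥ y = (A - lam • B) *ᵥ v ⬝ᵥ y := by
      rw [← hTr, hTsymm.mulVec_dotProduct, mulVec_mulVec, hTS, one_mulVec]
    rwa [huu, hxw] at hi

end Matrix

lemma abs_sub_le_max_of_sq_sub_le {δ μ lam C : ℝ} (hδ : 0 ≤ δ) (hμ : 0 < μ) (hC : 0 ≤ C)
    (h : (μ - lam) ^ 2 ≤ δ * μ * C ^ 2) :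
    |μ - lam| ≤ max (2 * δ * C ^ 2) (√(2 * δ * lam) * C) := by
  have hδC : 0 ≤ δ * C ^ 2 := by positivity
  rcases le_or_gt μ (2 * lam) with hle | hgt
  · refine le_max_of_le_right ?_
    rw [← Real.sqrt_sq_eq_abs, ← Real.sqrt_sq hC, ← Real.sqrt_mul' _ (sq_nonneg C)]
    exact Real.sqrt_le_sqrt (by nlinarith [mul_nonneg hδC (sub_nonneg.mpr hle)])
  · refine le_max_of_le_left ?_
    have hpos : 0 < μ - lam := by linarith
    rw [abs_of_pos hpos]
    refine le_of_mul_le_mul_left ?_ hpos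
    nlinarith [mul_nonneg hδC (sub_nonneg.mpr hgt.le)]

theorem generalized_eigenvalue_perturbation_refined_general (m : ℕ) (hm : 1 ≤ m)
    (A B : Matrix (Fin m) (Fin m) ℝ) (hA : A.IsSymm) (hBpd : B.PosDef)
    (δ : ℝ) (hδ : 0 < δ)
    (hAlb : ∀ x : Fin m → ℝ, δ⁻¹ * (x ⬝ᵥ x) ≤ x ⬝ᵥ A.mulVec x)
    (lam : ℝ) (v : Fin m → ℝ) (hv : v ≠ 0) :
    ∃ μ : ℝ, 0 < μ ∧ ∃ z : Fin m → ℝ, z ≠ 0 ∧ A.mulVec z = μ • B.mulVec z ∧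
      |μ - lam| ≤
        max (2 * δ * (Real.sqrt m *
              Real.sqrt (((A - lam • B).mulVec v) ⬝ᵥ ((A - lam • B).mulVec v)) /
                Real.sqrt (v ⬝ᵥ B.mulVec v)) ^ 2)
          (Real.sqrt (2 * δ * lam) * (Real.sqrt m *
              Real.sqrt (((A - lam • B).mulVec v) ⬝ᵥ ((A - lam • B).mulVec v)) /
                Real.sqrt (v ⬝ᵥ B.mulVec v))) := by
  set r := (A - lam • B) *ᵥ v
  set D := v ⬝ᵥ B *ᵥ v
  set C := √m * √(r ⬝ᵥ r) / √D
  have hD : 0 < D := by simpa using hBpd.dotProduct_mulVec_pos hv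
  have hr : 0 ≤ r ⬝ᵥ r := by simpa using dotProduct_star_self_nonneg r
  have hApd : A.PosDef := .of_mul_dotProduct_self_le hA (inv_pos.mpr hδ) hAlb
  obtain ⟨y, hy⟩ := mulVec_surjective_iff_isUnit.mpr hApd.isUnit r
  obtain ⟨μ, hμ, z, hz, hAz, hkey⟩ :=
    hApd.exists_generalized_eigenpair_sq_sub_div_mul_le hBpd lam hv hy
  refine ⟨μ, hμ, z, hz, hAz, abs_sub_le_max_of_sq_sub_le hδ.le hμ (by positivity) ?_⟩
  have hC : r ⬝ᵥ r / D ≤ C ^ 2 := by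
    rw [div_pow, mul_pow, Real.sq_sqrt m.cast_nonneg, Real.sq_sqrt hr, Real.sq_sqrt hD.le]
    gcongr
    exact le_mul_of_one_le_left hr (by exact_mod_cast hm)
  calc (μ - lam) ^ 2 = μ * ((μ - lam) ^ 2 / μ * D / D) := by field_simp
    _ ≤ μ * (δ * (r ⬝ᵥ r) / D) := by
        gcongr μ * (?_ / D)
        exact hkey.trans (dotProduct_le_mul_dotProduct_self_of_mulVec_eq hδ hAlb hy)
    _ = δ * μ * (r ⬝ᵥ r / D) := by ring
    _ ≤ δ * μ * C ^ 2 := by gcongr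

/-- if A, B are real symmetric m×m matrices (m ≥ 1), B positive definite, and
xᵀAx ≥ δ⁻¹·xᵀx for all x (δ > 0), then for λ > 0 and nonzero v, with r = (A − λB)v and
C = √m·‖r‖/√(vᵀBv), there is a generalized eigenpair Az = μBz with μ > 0, z ≠ 0 and
|μ − λ| ≤ max(2δC², √(2δλ)·C). -/
theorem generalized_eigenvalue_perturbation_refined (m : ℕ) (hm : 1 ≤ m)
    (A B : Matrix (Fin m) (Fin m) ℝ) (hA : A.IsSymm) (hB : B.IsSymm) (hBpd : B.PosDef)
    (δ : ℝ) (hδ : 0 < δ)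
    (hAlb : ∀ x : Fin m → ℝ, δ⁻¹ * (x ⬝ᵥ x) ≤ x ⬝ᵥ A.mulVec x)
    (lam : ℝ) (hlam : 0 < lam) (v : Fin m → ℝ) (hv : v ≠ 0) :
    ∃ μ : ℝ, 0 < μ ∧ ∃ z : Fin m → ℝ, z ≠ 0 ∧ A.mulVec z = μ • B.mulVec z ∧
      |μ - lam| ≤
        max (2 * δ * (Real.sqrt m *
              Real.sqrt (((A - lam • B).mulVec v) ⬝ᵥ ((A - lam • B).mulVec v)) /
                Real.sqrt (v ⬝ᵥ B.mulVec v)) ^ 2)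
          (Real.sqrt (2 * δ * lam) * (Real.sqrt m *
              Real.sqrt (((A - lam • B).mulVec v) ⬝ᵥ ((A - lam • B).mulVec v)) /
                Real.sqrt (v ⬝ᵥ B.mulVec v))) :=
  generalized_eigenvalue_perturbation_refined_general m hm A B hA hBpd δ hδ hAlb lam v hv
end
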